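/- arXiv:2109.14892 — 3 statements merged into one kernel-verified Lean document; each statement's English description precedes it below -/
import Mathlib

section
/- Every segment of a rectangulation has at most two endpoints at vertices of positive exponent; consequently the number S of segments in any rectangulation satisfies S ≥ (1/2)·Σ_v exp(v), i.e., S_opt ≥ exp(N)/2. -/
open Finset

theorem Finset.sum_card_filter_mem_eq_sum_card {α β : Type*} [Fintype α] [Fintype β]
    [DecidableEq β] (f : α → Finset β) :
    ∑ b : β, #{a | b ∈ f a} = ∑ a : α, #(f a) := by
  simpa only [bipartiteAbove, bipartiteBelow, filter_univ_mem] using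
    (sum_card_bipartiteAbove_eq_sum_card_bipartiteBelow (fun a b => b ∈ f a)
      (s := univ) (t := univ)).symm

/-- Every segment of a rectangulation has at most two endpoints at vertices of positive
exponent, while any rectangulation must place at least `exp(v)` segment-ends at each
vertex `v`; consequently the number `S` of segments satisfies `2S ≥ Σ_v exp(v)`,
i.e. `S_opt ≥ exp(N)/2`. -/
theorem stmt_4 {Seg Vert : Type*} [Fintype Seg] [Fintype Vert] [DecidableEq Vert]
    (ends : Seg → Finset Vert) (expv : Vert → ℕ)
    (hends : ∀ s : Seg, (ends s).card ≤ 2)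
    (hsat : ∀ v : Vert, expv v ≤ (Finset.univ.filter (fun s : Seg => v ∈ ends s)).card) :
    ∑ v : Vert, expv v ≤ 2 * Fintype.card Seg := by
  calc ∑ v : Vert, expv v
      ≤ ∑ v : Vert, #{s | v ∈ ends s} := sum_le_sum fun v _ => hsat v
    _ = ∑ s : Seg, #(ends s) := sum_card_filter_mem_eq_sum_card ends
    _ ≤ Fintype.card Seg • 2 := sum_le_card_nsmul _ _ _ fun s _ => hends s
    _ = 2 * Fintype.card Seg := by rw [smul_eq_mul, mul_comm]
end

section
/- For a finite multigraph G and edge set S, the rank of S in the bicircular matroid equals |V(S)| − tc(S), where tc(S) is the number of connected components of the subgraph induced by S that are trees. -/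
open Finset
open scoped Classical

/-- Vertices covered by an edge set `T` of the multigraph `ends : Ed → Sym2 V`. -/
noncomputable def vcov {V Ed : Type*} [Fintype V] (ends : Ed → Sym2 V)
    (T : Finset Ed) : Finset V :=
  Finset.univ.filter (fun v => ∃ e ∈ T, v ∈ ends e)

/-- Reachability inside the subgraph induced by the edge set `T`. -/
def reach {V Ed : Type*} (ends : Ed → Sym2 V) (T : Finset Ed) (a b : V) : Prop :=
  Relation.ReflTransGen (fun x y : V => ∃ e ∈ T, ends e = s(x, y)) a b

/-- Edges of the connected component of `v` in the subgraph induced by `T`. -/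
noncomputable def compE {V Ed : Type*} (ends : Ed → Sym2 V) (T : Finset Ed) (v : V) :
    Finset Ed :=
  T.filter (fun e => ∃ a, a ∈ ends e ∧ reach ends T v a)

/-- Vertices of the connected component of `v` in the subgraph induced by `T`. -/
noncomputable def compV {V Ed : Type*} [Fintype V] (ends : Ed → Sym2 V) (T : Finset Ed)
    (v : V) : Finset V :=
  (vcov ends T).filter (fun w => reach ends T v w)

/-- The number of connected components of the subgraph induced by `T` that are trees
(a connected component is a tree iff its number of edges is one less than its number
of vertices). -/
noncomputable def tc {V Ed : Type*} [Fintype V] (ends : Ed → Sym2 V) (T : Finset Ed) : ℕ :=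
  (((vcov ends T).filter
      (fun v => (compE ends T v).card + 1 = (compV ends T v).card)).image
    (fun v => compV ends T v)).card

/-- `T` induces a pseudoforest: every connected component has at most one cycle,
equivalently each component has at most as many edges as vertices. -/
def pseudoforest {V Ed : Type*} [Fintype V] (ends : Ed → Sym2 V) (T : Finset Ed) : Prop :=
  ∀ v ∈ vcov ends T, (compE ends T v).card ≤ (compV ends T v).card

/-- The rank of an edge set in the bicircular matroid: the maximum size of a subset
inducing a pseudoforest. -/
noncomputable def bicircRank {V Ed : Type*} [Fintype V] (ends : Ed → Sym2 V)
    (T : Finset Ed) : ℕ :=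
  (T.powerset.filter (fun T' => pseudoforest ends T')).sup Finset.card

/-!
Split `S` into its connected components. A pseudoforest has at most as many edges as
vertices in each component, and inside a component `C` of `S` it can use at most the
`|E(C)|` edges present, so `rk S ≤ ∑_C min (|E(C)|, |C|)`. Conversely a spanning tree of
`C`, grown one crossing edge at a time, has `|C| - 1` edges, and topping it up with edges
of `C` to `min (|E(C)|, |C|)` edges keeps it connected, hence a pseudoforest. Since a
connected component has `|E(C)| ≥ |C| - 1`, the minimum is `|C| - 1` exactly on tree
components and `|C|` otherwise, which turns the sum into `|V(S)| - tc(S)`.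
-/

namespace Bicircular

variable {V Ed : Type*} {ends : Ed → Sym2 V} {S T T' F : Finset Ed} {e : Ed} {v w x y : V}

lemma reach_symm (h : reach ends T v w) : reach ends T w v := by
  induction h with
  | refl => exact .refl
  | tail _ hstep ih =>
    obtain ⟨e, he, hends⟩ := hstep
    exact .head ⟨e, he, by rw [hends, Sym2.eq_swap]⟩ ih

lemma reach_mono (hTS : T ⊆ S) (h : reach ends T v w) : reach ends S v w :=
  Relation.ReflTransGen.mono (fun _ _ ⟨e, he, hends⟩ => ⟨e, hTS he, hends⟩) _ _ h

lemma reach_of_mem_ends (he : e ∈ T) (hv : v ∈ ends e) (hw : w ∈ ends e) :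
    reach ends T v w := by
  by_cases hvw : v = w
  · exact hvw ▸ .refl
  · exact .single ⟨e, he, (Sym2.mem_and_mem_iff hvw).1 ⟨hv, hw⟩⟩

lemma reach_empty_iff : reach ends ∅ v w ↔ v = w := by
  refine ⟨fun h => ?_, fun h => h ▸ .refl⟩
  rcases h.cases_tail with h | ⟨_, _, e, he, _⟩
  exacts [h.symm, absurd he (notMem_empty e)]

lemma exists_crossing_edge (hS : reach ends S v w) (hT : ¬ reach ends T v w) :
    ∃ e ∈ S, ∃ x y, ends e = s(x, y) ∧ reach ends T v x ∧ ¬ reach ends T v y := by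
  induction hS with
  | refl => exact absurd .refl hT
  | @tail x y _ hxy ih =>
    by_cases hx : reach ends T v x
    · obtain ⟨e, he, hends⟩ := hxy
      exact ⟨e, he, x, y, hends, hx, hT⟩
    · exact ih hx

lemma mem_compE : e ∈ compE ends T v ↔ e ∈ T ∧ ∃ a ∈ ends e, reach ends T v a := by
  rw [compE, mem_filter]

lemma compE_subset : compE ends T v ⊆ T := fun _ he => (mem_compE.1 he).1

lemma reach_iff_of_compE_subset (hT' : T' ⊆ T) (h : compE ends T v ⊆ T') :
    reach ends T' v w ↔ reach ends T v w := by
  refine ⟨reach_mono hT', fun hw => ?_⟩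
  induction hw with
  | refl => exact .refl
  | @tail p q hp hpq ih =>
    obtain ⟨e, he, hends⟩ := hpq
    exact ih.tail ⟨e, h (mem_compE.2 ⟨he, p, hends ▸ Sym2.mem_mk_left p q, hp⟩), hends⟩

lemma compE_eq_of_compE_subset (hT' : T' ⊆ T) (h : compE ends T v ⊆ T') :
    compE ends T' v = compE ends T v :=
  ext fun e => by
    simp only [mem_compE, reach_iff_of_compE_subset hT' h]
    exact ⟨fun ⟨he, ha⟩ => ⟨hT' he, ha⟩, fun ⟨he, ha⟩ => ⟨h (mem_compE.2 ⟨he, ha⟩), ha⟩⟩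

/-- For a component `C` of some `S ⊇ T`, these are exactly the edges of `T` inside `C`. -/
noncomputable def edgesMeeting (ends : Ed → Sym2 V) (T : Finset Ed) (C : Finset V) :
    Finset Ed :=
  T.filter fun e => ∃ a ∈ ends e, a ∈ C

lemma mem_edgesMeeting {C : Finset V} :
    e ∈ edgesMeeting ends T C ↔ e ∈ T ∧ ∃ a ∈ ends e, a ∈ C := by
  rw [edgesMeeting, mem_filter]

lemma edgesMeeting_subset (C : Finset V) : edgesMeeting ends T C ⊆ T := fun _ he =>
  (mem_edgesMeeting.1 he).1

lemma edgesMeeting_mono (hTS : T ⊆ S) (C : Finset V) :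
    edgesMeeting ends T C ⊆ edgesMeeting ends S C := fun _ he =>
  mem_edgesMeeting.2 ⟨hTS (mem_edgesMeeting.1 he).1, (mem_edgesMeeting.1 he).2⟩

variable [Fintype V]

lemma mem_vcov_iff : v ∈ vcov ends T ↔ ∃ e ∈ T, v ∈ ends e := by
  rw [vcov, mem_filter, and_iff_right (mem_univ v)]

lemma mem_vcov (he : e ∈ T) (hv : v ∈ ends e) : v ∈ vcov ends T :=
  mem_vcov_iff.2 ⟨e, he, hv⟩

lemma vcov_mono (hTS : T ⊆ S) : vcov ends T ⊆ vcov ends S := fun _ hv => by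
  obtain ⟨e, he, hv⟩ := mem_vcov_iff.1 hv
  exact mem_vcov (hTS he) hv

lemma mem_compV : w ∈ compV ends T v ↔ w ∈ vcov ends T ∧ reach ends T v w := by
  rw [compV, mem_filter]

lemma mem_vcov_of_reach (h : reach ends T v w) (hvw : v ≠ w) : w ∈ vcov ends T := by
  rcases h.cases_tail with h | ⟨x, _, e, he, hends⟩
  · exact absurd h.symm hvw
  · exact mem_vcov he (hends ▸ Sym2.mem_mk_right x w)

/-- Unlike `compV ends T v`, this contains `v` even if `v ∉ vcov ends T`. -/
noncomputable def reachSet (ends : Ed → Sym2 V) (T : Finset Ed) (v : V) : Finset V :=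
  univ.filter (reach ends T v)

lemma mem_reachSet : w ∈ reachSet ends T v ↔ reach ends T v w := by
  simp [reachSet]

lemma reachSet_mono (hTS : T ⊆ S) : reachSet ends T v ⊆ reachSet ends S v :=
  fun _ hw => mem_reachSet.2 (reach_mono hTS (mem_reachSet.1 hw))

lemma reachSet_eq_of_reach (h : reach ends T v w) : reachSet ends T v = reachSet ends T w :=
  ext fun _ => by
    simp only [mem_reachSet]
    exact ⟨(reach_symm h).trans, h.trans⟩

lemma compV_eq_reachSet (hv : v ∈ vcov ends T) : compV ends T v = reachSet ends T v :=
  ext fun w => by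
    simp only [mem_compV, mem_reachSet, and_iff_right_iff_imp]
    intro h
    by_cases hvw : v = w
    · exact hvw ▸ hv
    · exact mem_vcov_of_reach h hvw

lemma compV_eq_of_reach (h : reach ends T v w) : compV ends T v = compV ends T w :=
  ext fun _ => by
    simp only [mem_compV]
    exact and_congr_right fun _ => ⟨(reach_symm h).trans, h.trans⟩

/-- Connected with one edge fewer than vertices, i.e. a tree; `∅` is the one-vertex tree
`{v}`. -/
def IsTreeAt (ends : Ed → Sym2 V) (F : Finset Ed) (v : V) : Prop :=
  (∀ e ∈ F, ∀ z ∈ ends e, reach ends F v z) ∧ F.card + 1 = (reachSet ends F v).card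

lemma isTreeAt_empty : IsTreeAt ends ∅ v := by
  refine ⟨fun e he => absurd he (notMem_empty e), ?_⟩
  have : reachSet ends ∅ v = {v} :=
    ext fun w => by rw [mem_reachSet, reach_empty_iff, mem_singleton, eq_comm]
  rw [this, card_empty, card_singleton]

lemma reachSet_insert (hF : ∀ e ∈ F, ∀ z ∈ ends e, reach ends F v z) (hx : reach ends F v x)
    (he : ends e = s(x, y)) : reachSet ends (insert e F) v = insert y (reachSet ends F v) := by
  ext z
  rw [mem_insert, mem_reachSet, mem_reachSet]
  constructor
  · intro hz
    induction hz with
    | refl => exact .inr .refl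
    | @tail p q _ hpq _ =>
      obtain ⟨e', he', hends⟩ := hpq
      have hq : q ∈ ends e' := hends ▸ Sym2.mem_mk_right p q
      rcases mem_insert.1 he' with rfl | he'
      · rw [he, Sym2.mem_iff] at hq
        rcases hq with rfl | rfl
        exacts [.inr hx, .inl rfl]
      · exact .inr (hF e' he' q hq)
  · rintro (rfl | hz)
    · exact (reach_mono (subset_insert e F) hx).tail ⟨e, mem_insert_self e F, he⟩
    · exact reach_mono (subset_insert e F) hz

lemma IsTreeAt.insert_of_reach (hF : IsTreeAt ends F v) (hx : reach ends F v x)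
    (hy : ¬ reach ends F v y) (he : ends e = s(x, y)) :
    e ∉ F ∧ IsTreeAt ends (insert e F) v := by
  have heF : e ∉ F := fun heF => hy (hF.1 e heF y (he ▸ Sym2.mem_mk_right x y))
  have hR := reachSet_insert hF.1 hx he
  refine ⟨heF, fun e' he' z hz => mem_reachSet.1 ?_, ?_⟩
  · rw [hR]
    rcases mem_insert.1 he' with rfl | he'
    · rw [he, Sym2.mem_iff] at hz
      rcases hz with rfl | rfl
      exacts [mem_insert_of_mem (mem_reachSet.2 hx), mem_insert_self _ _]
    · exact mem_insert_of_mem (mem_reachSet.2 (hF.1 e' he' z hz))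
  · rw [hR, card_insert_of_notMem heF, card_insert_of_notMem (mt mem_reachSet.1 hy), hF.2]

/-- A tree through `v` with as many edges as possible spans the component of `v`: otherwise
an edge leaving it could be added. -/
lemma exists_isTreeAt_reachSet_eq (S : Finset Ed) (v : V) :
    ∃ F ⊆ S, IsTreeAt ends F v ∧ reachSet ends F v = reachSet ends S v := by
  obtain ⟨F, hF, hmax⟩ := (S.powerset.filter (IsTreeAt ends · v)).exists_max_image card
    ⟨∅, mem_filter.2 ⟨empty_mem_powerset S, isTreeAt_empty⟩⟩
  rw [mem_filter, mem_powerset] at hF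
  refine ⟨F, hF.1, hF.2, (reachSet_mono hF.1).antisymm fun w hw => ?_⟩
  by_contra hwF
  obtain ⟨e, heS, x, y, hends, hx, hy⟩ :=
    exists_crossing_edge (mem_reachSet.1 hw) (mt mem_reachSet.2 hwF)
  obtain ⟨heF, hins⟩ := hF.2.insert_of_reach hx hy hends
  have := hmax (insert e F) (mem_filter.2 ⟨mem_powerset.2 (insert_subset heS hF.1), hins⟩)
  rw [card_insert_of_notMem heF] at this
  omega

lemma IsTreeAt.subset_compE (hF : IsTreeAt ends F v) (hFS : F ⊆ S) : F ⊆ compE ends S v :=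
  fun e he => mem_compE.2 ⟨hFS he, _, Sym2.out_fst_mem _,
    reach_mono hFS (hF.1 e he _ (Sym2.out_fst_mem _))⟩

lemma card_reachSet_le (S : Finset Ed) (v : V) :
    (reachSet ends S v).card ≤ (compE ends S v).card + 1 := by
  obtain ⟨F, hFS, hF, hspan⟩ := exists_isTreeAt_reachSet_eq (ends := ends) S v
  rw [← hspan, ← hF.2]
  exact Nat.add_le_add_right (card_le_card (hF.subset_compE hFS)) 1

noncomputable def comps (ends : Ed → Sym2 V) (T : Finset Ed) : Finset (Finset V) :=
  (vcov ends T).image (compV ends T)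

variable {C : Finset V}

lemma mem_iff_compV_eq (hC : C ∈ comps ends T) :
    v ∈ C ↔ v ∈ vcov ends T ∧ compV ends T v = C := by
  obtain ⟨u, -, rfl⟩ := mem_image.1 hC
  refine ⟨fun hv => ?_, fun ⟨hv, h⟩ => h ▸ mem_compV.2 ⟨hv, .refl⟩⟩
  obtain ⟨hv, huv⟩ := mem_compV.1 hv
  exact ⟨hv, (compV_eq_of_reach huv).symm⟩

lemma mem_of_mem_edgesMeeting (hTS : T ⊆ S) (hC : C ∈ comps ends S)
    (he : e ∈ edgesMeeting ends T C) (hx : x ∈ ends e) : x ∈ C := by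
  obtain ⟨heT, a, ha, haC⟩ := mem_edgesMeeting.1 he
  rw [mem_iff_compV_eq hC] at haC ⊢
  exact ⟨mem_vcov (hTS heT) hx,
    (compV_eq_of_reach (reach_of_mem_ends (hTS heT) hx ha)).trans haC.2⟩

lemma vcov_edgesMeeting_subset (hTS : T ⊆ S) (hC : C ∈ comps ends S) :
    vcov ends (edgesMeeting ends T C) ⊆ C := fun x hx => by
  obtain ⟨e, he, hx⟩ := mem_vcov_iff.1 hx
  exact mem_of_mem_edgesMeeting hTS hC he hx

lemma edgesMeeting_compV :
    edgesMeeting ends T (compV ends T v) = compE ends T v :=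
  ext fun e => by
    rw [mem_edgesMeeting, mem_compE]
    simp only [mem_compV]
    exact and_congr_right fun he =>
      exists_congr fun a => and_congr_right fun ha => and_iff_right (mem_vcov he ha)

lemma card_vcov_eq_sum : (vcov ends T).card = ∑ C ∈ comps ends T, C.card := by
  rw [card_eq_sum_card_fiberwise fun v hv => mem_image_of_mem (compV ends T) hv]
  refine sum_congr rfl fun C hC => congrArg card (ext fun v => ?_)
  rw [mem_filter, mem_iff_compV_eq hC]

lemma card_eq_sum_edgesMeeting (hTS : T ⊆ S) :
    T.card = ∑ C ∈ comps ends S, (edgesMeeting ends T C).card := by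
  have hmaps : Set.MapsTo (fun e => compV ends S (ends e).out.1) T (comps ends S) :=
    fun e he => mem_image_of_mem _ (mem_vcov (hTS he) (Sym2.out_fst_mem _))
  rw [card_eq_sum_card_fiberwise hmaps]
  refine sum_congr rfl fun C hC => congrArg card (ext fun e => ?_)
  rw [mem_filter, mem_edgesMeeting]
  refine and_congr_right fun he => ⟨fun h => ⟨_, Sym2.out_fst_mem _,
    (mem_iff_compV_eq hC).2 ⟨mem_vcov (hTS he) (Sym2.out_fst_mem _), h⟩⟩, fun h => ?_⟩
  exact ((mem_iff_compV_eq hC).1 (mem_of_mem_edgesMeeting hTS hC (mem_edgesMeeting.2 ⟨he, h⟩)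
    (Sym2.out_fst_mem _))).2

lemma tc_eq_card_filter_comps (S : Finset Ed) :
    tc ends S = ((comps ends S).filter
      fun C => (edgesMeeting ends S C).card + 1 = C.card).card := by
  rw [tc, comps, filter_image]
  exact congrArg (card ∘ image _) (filter_congr fun _ _ => by rw [edgesMeeting_compV])

lemma compV_eq_of_compE_subset (hT' : T' ⊆ T) (h : compE ends T v ⊆ T') :
    compV ends T' v = compV ends T v :=
  ext fun w => by
    simp only [mem_compV, reach_iff_of_compE_subset hT' h]
    refine ⟨fun ⟨hw, hvw⟩ => ⟨vcov_mono hT' hw, hvw⟩, fun ⟨hw, hvw⟩ => ⟨?_, hvw⟩⟩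
    obtain ⟨e, he, hwe⟩ := mem_vcov_iff.1 hw
    exact mem_vcov (h (mem_compE.2 ⟨he, w, hwe, hvw⟩)) hwe

lemma compE_subset_edgesMeeting (hTS : T ⊆ S) :
    compE ends T v ⊆ edgesMeeting ends T (compV ends S v) := fun e he => by
  obtain ⟨he, a, ha, hva⟩ := mem_compE.1 he
  exact mem_edgesMeeting.2 ⟨he, a, ha, mem_compV.2 ⟨mem_vcov (hTS he) ha, reach_mono hTS hva⟩⟩

lemma pseudoforest_iff_forall_comps (hTS : T ⊆ S) :
    pseudoforest ends T ↔ ∀ C ∈ comps ends S, pseudoforest ends (edgesMeeting ends T C) := by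
  have hres := fun v => compE_subset_edgesMeeting (ends := ends) (v := v) hTS
  have hsub := edgesMeeting_subset (ends := ends) (T := T)
  constructor
  · intro hpf C hC u hu
    obtain rfl := ((mem_iff_compV_eq hC).1 (vcov_edgesMeeting_subset hTS hC hu)).2
    rw [compE_eq_of_compE_subset (hsub _) (hres u), compV_eq_of_compE_subset (hsub _) (hres u)]
    exact hpf u (vcov_mono (hsub _) hu)
  · intro h u hu
    obtain ⟨e, he, hue⟩ := mem_vcov_iff.1 hu
    have huS : u ∈ vcov ends S := vcov_mono hTS hu
    have := h _ (mem_image_of_mem _ huS) u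
      (mem_vcov (hres u (mem_compE.2 ⟨he, u, hue, .refl⟩)) hue)
    rwa [compE_eq_of_compE_subset (hsub _) (hres u),
      compV_eq_of_compE_subset (hsub _) (hres u)] at this

lemma card_le_card_vcov (hpf : pseudoforest ends T) : T.card ≤ (vcov ends T).card := by
  rw [card_eq_sum_edgesMeeting (ends := ends) subset_rfl, card_vcov_eq_sum]
  refine sum_le_sum fun C hC => ?_
  obtain ⟨v, hv, rfl⟩ := mem_image.1 hC
  rw [edgesMeeting_compV]
  exact hpf v hv

lemma card_le_sum_min (hTS : T ⊆ S) (hpf : pseudoforest ends T) :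
    T.card ≤ ∑ C ∈ comps ends S, min (edgesMeeting ends S C).card C.card := by
  rw [card_eq_sum_edgesMeeting (ends := ends) hTS]
  refine sum_le_sum fun C hC => le_min (card_le_card (edgesMeeting_mono hTS C)) ?_
  calc (edgesMeeting ends T C).card
      ≤ (vcov ends (edgesMeeting ends T C)).card :=
        card_le_card_vcov ((pseudoforest_iff_forall_comps hTS).1 hpf C hC)
    _ ≤ C.card := card_le_card (vcov_edgesMeeting_subset hTS hC)

/-- Any edge set between a spanning tree of the component of `v` and all of its edges is
connected, so it is a pseudoforest as soon as it has at most `|compV|` edges. -/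
lemma exists_pseudoforest_subset_compE (hv : v ∈ vcov ends S) :
    ∃ G ⊆ compE ends S v,
      G.card = min (compE ends S v).card (compV ends S v).card ∧ pseudoforest ends G := by
  obtain ⟨F, hFS, hF, hspan⟩ := exists_isTreeAt_reachSet_eq (ends := ends) S v
  have hFE := hF.subset_compE hFS
  rw [compV_eq_reachSet hv, ← hspan]
  obtain ⟨G, hFG, hGE, hGcard⟩ := exists_subsuperset_card_eq hFE
    (n := min (compE ends S v).card (reachSet ends F v).card)
    (le_min (card_le_card hFE) (by have := hF.2; omega)) (min_le_left _ _)
  refine ⟨G, hGE, hGcard, fun u hu => ?_⟩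
  have hvu : reach ends G v u := by
    obtain ⟨e, he, hue⟩ := mem_vcov_iff.1 hu
    obtain ⟨-, a, ha, hva⟩ := mem_compE.1 (hGE he)
    have hva : reach ends F v a := mem_reachSet.1 (hspan ▸ mem_reachSet.2 hva)
    exact (reach_mono hFG hva).trans (reach_of_mem_ends he ha hue)
  rw [compV_eq_reachSet hu, ← reachSet_eq_of_reach hvu]
  calc (compE ends G u).card ≤ G.card := card_le_card compE_subset
    _ ≤ (reachSet ends F v).card := hGcard ▸ min_le_right _ _
    _ ≤ (reachSet ends G v).card := card_le_card (reachSet_mono hFG)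

lemma edgesMeeting_biUnion {g : Finset V → Finset Ed}
    (hg : ∀ C ∈ comps ends S, g C ⊆ edgesMeeting ends S C) (hC : C ∈ comps ends S) :
    edgesMeeting ends ((comps ends S).biUnion g) C = g C :=
  ext fun e => by
    rw [mem_edgesMeeting, mem_biUnion]
    refine ⟨fun ⟨⟨C', hC', he⟩, a, ha, haC⟩ => ?_,
      fun he => ⟨⟨C, hC, he⟩, (mem_edgesMeeting.1 (hg C hC he)).2⟩⟩
    have haC' := mem_of_mem_edgesMeeting subset_rfl hC' (hg C' hC' he) ha
    rwa [((mem_iff_compV_eq hC).1 haC).2.symm.trans ((mem_iff_compV_eq hC').1 haC').2]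

lemma exists_pseudoforest_card_eq_sum_min (S : Finset Ed) :
    ∃ T ⊆ S, pseudoforest ends T ∧
      T.card = ∑ C ∈ comps ends S, min (edgesMeeting ends S C).card C.card := by
  have hcomp : ∀ C ∈ comps ends S, ∃ G ⊆ edgesMeeting ends S C,
      G.card = min (edgesMeeting ends S C).card C.card ∧ pseudoforest ends G := by
    intro C hC
    obtain ⟨v, hv, rfl⟩ := mem_image.1 hC
    rw [edgesMeeting_compV]
    exact exists_pseudoforest_subset_compE hv
  choose! g hgS hgcard hgpf using hcomp
  have hTS : (comps ends S).biUnion g ⊆ S :=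
    biUnion_subset.2 fun C hC => (hgS C hC).trans (edgesMeeting_subset C)
  have hres := fun C (hC : C ∈ comps ends S) => edgesMeeting_biUnion hgS hC
  refine ⟨_, hTS, (pseudoforest_iff_forall_comps hTS).2 fun C hC => hres C hC ▸ hgpf C hC, ?_⟩
  rw [card_eq_sum_edgesMeeting (ends := ends) hTS]
  exact sum_congr rfl fun C hC => by rw [hres C hC, hgcard C hC]

lemma bicircRank_eq_sum_min (S : Finset Ed) :
    bicircRank ends S = ∑ C ∈ comps ends S, min (edgesMeeting ends S C).card C.card := by
  obtain ⟨T, hTS, hpf, hcard⟩ := exists_pseudoforest_card_eq_sum_min (ends := ends) S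
  refine le_antisymm (Finset.sup_le fun T hT => ?_)
    (hcard ▸ Finset.le_sup (mem_filter.2 ⟨mem_powerset.2 hTS, hpf⟩))
  rw [mem_filter, mem_powerset] at hT
  exact card_le_sum_min hT.1 hT.2

/-- A component has at least `|C| - 1` edges, so `min (|E(C)|, |C|)` is `|C| - 1` on tree
components and `|C|` otherwise. -/
lemma sum_min_add_tc (S : Finset Ed) :
    ∑ C ∈ comps ends S, min (edgesMeeting ends S C).card C.card + tc ends S =
      (vcov ends S).card := by
  rw [tc_eq_card_filter_comps, card_filter, ← sum_add_distrib, card_vcov_eq_sum]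
  refine sum_congr rfl fun C hC => ?_
  obtain ⟨v, hv, rfl⟩ := mem_image.1 hC
  have hle : (compV ends S v).card ≤ (edgesMeeting ends S (compV ends S v)).card + 1 := by
    rw [edgesMeeting_compV, compV_eq_reachSet hv]
    exact card_reachSet_le S v
  split_ifs <;> omega

end Bicircular

theorem stmt_12_general {V Ed : Type*} [Fintype V] (ends : Ed → Sym2 V)
    (S : Finset Ed) :
    bicircRank ends S = (vcov ends S).card - tc ends S := by
  have := Bicircular.sum_min_add_tc (ends := ends) S
  rw [Bicircular.bicircRank_eq_sum_min]
  omega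

/-- For a finite multigraph and an edge set `S`, the rank of `S` in the bicircular
matroid equals `|V(S)| - tc(S)`, where `tc(S)` is the number of tree components of the
subgraph induced by `S`. -/
theorem stmt_12 {V Ed : Type*} [Fintype V] [Fintype Ed] (ends : Ed → Sym2 V)
    (S : Finset Ed) :
    bicircRank ends S = (vcov ends S).card - tc ends S :=
  stmt_12_general ends S
end

section
/- Marginal gain is monotone under greedy extension: if S is obtained from S₀ by applying steps of the greedy strategy, then g(S₀) ≤ g(S); moreover, if S is saturating (induces a rectangulation) then |S| = exp(N) − g(S) ≤ exp(N) − g(S₀). -/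
open Finset

/-- The marginal gain of a cut-set `S`:
`g(S) = Σ_v (exp(v) - exp_S(v)) - |S|`. -/
def gain {Seg Vert : Type*} [Fintype Vert] (expv : Vert → ℕ)
    (relExp : Finset Seg → Vert → ℕ) (S : Finset Seg) : ℤ :=
  (∑ v : Vert, ((expv v : ℤ) - (relExp S v : ℤ))) - (S.card : ℤ)

/-- One step of the greedy strategy: a single new segment is added, the relative
exponent of no vertex increases, and the relative exponent of some vertex strictly
decreases. -/
def GreedyStep {Seg Vert : Type*} [DecidableEq Seg]
    (relExp : Finset Seg → Vert → ℕ) (S₀ S₁ : Finset Seg) : Prop :=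
  ∃ s ∉ S₀, S₁ = insert s S₀ ∧
    (∀ v : Vert, relExp S₁ v ≤ relExp S₀ v) ∧
    (∃ v : Vert, relExp S₁ v < relExp S₀ v)

/-!
A greedy step adds one segment and lowers the total relative exponent `Σ_v exp_S(v)` by at least
one, so it cannot lower `g`.
-/

section

variable {Seg Vert : Type*} [Fintype Vert] (expv : Vert → ℕ) (relExp : Finset Seg → Vert → ℕ)

theorem gain_eq (S : Finset Seg) :
    gain expv relExp S = ∑ v, (expv v : ℤ) - ∑ v, (relExp S v : ℤ) - S.card := by
  rw [gain, sum_sub_distrib]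

theorem card_eq_sum_sub_gain_of_relExp_eq_zero {S : Finset Seg} (hsat : ∀ v, relExp S v = 0) :
    (S.card : ℤ) = ∑ v, (expv v : ℤ) - gain expv relExp S := by
  simp only [gain_eq, hsat, Nat.cast_zero, sum_const_zero]
  ring

variable [DecidableEq Seg] {expv relExp}

theorem GreedyStep.sum_relExp_lt {S₀ S₁ : Finset Seg} (h : GreedyStep relExp S₀ S₁) :
    ∑ v, relExp S₁ v < ∑ v, relExp S₀ v := by
  obtain ⟨-, -, -, hle, v, hv⟩ := h
  exact sum_lt_sum (fun w _ => hle w) ⟨v, mem_univ v, hv⟩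

theorem GreedyStep.gain_le {S₀ S₁ : Finset Seg} (h : GreedyStep relExp S₀ S₁) :
    gain expv relExp S₀ ≤ gain expv relExp S₁ := by
  have hsum : ∑ v, (relExp S₁ v : ℤ) < ∑ v, (relExp S₀ v : ℤ) := mod_cast h.sum_relExp_lt
  obtain ⟨s, hs, rfl, -⟩ := h
  rw [gain_eq, gain_eq, card_insert_of_notMem hs]
  push_cast
  linarith

theorem gain_le_of_reflTransGen_greedyStep {S₀ S : Finset Seg}
    (h : Relation.ReflTransGen (GreedyStep relExp) S₀ S) :
    gain expv relExp S₀ ≤ gain expv relExp S := by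
  induction h with
  | refl => exact le_rfl
  | tail _ hstep ih => exact ih.trans hstep.gain_le

end

/-- Marginal gain is monotone under greedy extension: if `S` is obtained from `S₀` by
applying steps of the greedy strategy, then `g(S₀) ≤ g(S)`; moreover, if `S` is
saturating (i.e. `exp_S(v) = 0` for all `v`, so `S` induces a rectangulation), then
`|S| = exp(N) - g(S) ≤ exp(N) - g(S₀)`. -/
theorem stmt_16 {Seg Vert : Type*} [Fintype Vert] [DecidableEq Seg]
    (expv : Vert → ℕ) (relExp : Finset Seg → Vert → ℕ)
    (S₀ S : Finset Seg)
    (hgreedy : Relation.ReflTransGen (GreedyStep relExp) S₀ S) :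
    gain expv relExp S₀ ≤ gain expv relExp S ∧
      ((∀ v : Vert, relExp S v = 0) →
        (S.card : ℤ) = (∑ v : Vert, (expv v : ℤ)) - gain expv relExp S ∧
        (S.card : ℤ) ≤ (∑ v : Vert, (expv v : ℤ)) - gain expv relExp S₀) := by
  have hmono := gain_le_of_reflTransGen_greedyStep (expv := expv) hgreedy
  refine ⟨hmono, fun hsat => ?_⟩
  have hcard := card_eq_sum_sub_gain_of_relExp_eq_zero expv relExp hsat
  exact ⟨hcard, by linarith⟩
end
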